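/- Define u₁, u₂ : (0,1) → ℝ by u₁(t) = (1/2)(2 − 3√t + t^{3/2}) + (3/2)(1 − √t)(1 − t) and u₂(t) = (1/(8t))(2 − 3√t + t^{3/2}) + (3/(8√t))(1 − t), and let F : (0,1) → ℝ be given by F(t) = u₁(t) for t ≤ 1/4 and F(t) = u₂(t) for t > 1/4. Then u₁'(1/4) = −3 and u₂'(1/4) = −17/4, F is continuous at 1/4 (u₁(1/4) = u₂(1/4)), and F is not convex on (0,1). -/

import Mathlib

open Real Set

/-- `u₁(t) = (1/2)(2 - 3√t + t^{3/2}) + (3/2)(1 - √t)(1 - t)`. -/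
noncomputable def u₁ (t : ℝ) : ℝ :=
  (1/2) * (2 - 3 * Real.sqrt t + Real.sqrt t ^ 3) +
    (3/2) * (1 - Real.sqrt t) * (1 - t)

/-- `u₂(t) = (1/(8t))(2 - 3√t + t^{3/2}) + (3/(8√t))(1 - t)`. -/
noncomputable def u₂ (t : ℝ) : ℝ :=
  (1 / (8 * t)) * (2 - 3 * Real.sqrt t + Real.sqrt t ^ 3) +
    (3 / (8 * Real.sqrt t)) * (1 - t)

/-- `F = u₁` on `(0, 1/4]` and `F = u₂` on `(1/4, 1)`. -/
noncomputable def Fglue (t : ℝ) : ℝ := if t ≤ 1/4 then u₁ t else u₂ t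

/-!
With `s = √t` the two pieces simplify to `u₁ = 5/2 - 3s - 3s²/2 + 2s³` and `u₂ = (1 - s³)/(4s²)`.
They agree at `t = 1/4`, but there the slope drops from `-3` (left) to `-17/4` (right), whereas
the left derivative of a convex function never exceeds its right derivative.
-/

lemma ConvexOn.le_of_hasDerivWithinAt_Iio_Ioi {S : Set ℝ} {f : ℝ → ℝ} {x a b : ℝ}
    (hf : ConvexOn ℝ S f) (hx : x ∈ interior S) (ha : HasDerivWithinAt f a (Iio x) x)
    (hb : HasDerivWithinAt f b (Ioi x) x) : a ≤ b := by
  rw [← ha.derivWithin (uniqueDiffWithinAt_Iio x), ← hb.derivWithin (uniqueDiffWithinAt_Ioi x)]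
  exact hf.leftDeriv_le_rightDeriv_of_mem_interior hx

section Piecewise

variable {g h : ℝ → ℝ} {c a b : ℝ}

lemma hasDerivWithinAt_Iic_ite_le (hg : HasDerivAt g a c) :
    HasDerivWithinAt (fun x ↦ if x ≤ c then g x else h x) a (Iic c) c :=
  hg.hasDerivWithinAt.congr (fun _ hx ↦ if_pos hx) (if_pos le_rfl)

lemma hasDerivWithinAt_Ici_ite_le (hh : HasDerivAt h b c) (hgh : g c = h c) :
    HasDerivWithinAt (fun x ↦ if x ≤ c then g x else h x) b (Ici c) c := by
  refine hh.hasDerivWithinAt.congr (fun x hx ↦ ?_) (by simp [hgh])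
  rcases (mem_Ici.1 hx).eq_or_lt with rfl | hcx
  · simp [hgh]
  · exact if_neg hcx.not_ge

end Piecewise

lemma u₁_eq (t : ℝ) : u₁ t = 5/2 - 3 * √t - 3/2 * t + 2 * t * √t := by
  rcases le_or_gt 0 t with ht | ht
  · unfold u₁; linear_combination (1/2 : ℝ) * √t * sq_sqrt ht
  · rw [u₁, sqrt_eq_zero'.2 ht.le]; ring

lemma u₂_eq {t : ℝ} (ht : 0 < t) : u₂ t = 1 / (4 * t) - √t / 4 := by
  have := (sqrt_pos.2 ht).ne'
  unfold u₂
  field_simp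
  linear_combination (4 * √t ^ 2 + 12 * t - 12) * sq_sqrt ht.le

lemma hasDerivAt_u₁ {t : ℝ} (ht : 0 < t) :
    HasDerivAt u₁ (3 * √t - 3/2 - 3 / (2 * √t)) t := by
  have hs := hasDerivAt_sqrt ht.ne'
  have H := (((hasDerivAt_const t (5/2 : ℝ)).sub (hs.const_mul 3)).sub
    ((hasDerivAt_id t).const_mul (3/2))).add (((hasDerivAt_id t).const_mul 2).mul hs)
  refine (H.congr_of_eventuallyEq (.of_forall fun x ↦ ?_)).congr_deriv ?_
  · rw [u₁_eq]; simp only [Pi.add_apply, Pi.sub_apply, Pi.mul_apply, id]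
  · have := (sqrt_pos.2 ht).ne'
    field_simp
    simp only [id]
    linear_combination (-2) * sq_sqrt ht.le

lemma hasDerivAt_u₂ {t : ℝ} (ht : 0 < t) :
    HasDerivAt u₂ (-1 / (4 * t ^ 2) - 1 / (8 * √t)) t := by
  have H := ((hasDerivAt_inv ht.ne').const_mul (1/4 : ℝ)).sub ((hasDerivAt_sqrt ht.ne').div_const 4)
  refine (H.congr_of_eventuallyEq ?_).congr_deriv ?_
  · filter_upwards [lt_mem_nhds ht] with x hx
    rw [u₂_eq hx]; simp only [Pi.sub_apply]; ring
  · have := (sqrt_pos.2 ht).ne'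
    field_simp
    ring

lemma sqrt_quarter : √(1/4 : ℝ) = 1/2 := by
  rw [show (1/4 : ℝ) = (1/2) ^ 2 by norm_num, sqrt_sq (by norm_num)]

/-- `u₁'(1/4) = -3`, `u₂'(1/4) = -17/4`, `F` is continuous at `1/4`
(with `u₁(1/4) = u₂(1/4)`), and `F` is not convex on `(0,1)`. -/
theorem Fglue_not_convex :
    deriv u₁ (1/4) = -3 ∧
    deriv u₂ (1/4) = -17/4 ∧
    u₁ (1/4) = u₂ (1/4) ∧
    ContinuousAt Fglue (1/4) ∧
    ¬ ConvexOn ℝ (Set.Ioo 0 1) Fglue := by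
  have h₁ : HasDerivAt u₁ (-3) (1/4) := by
    convert hasDerivAt_u₁ (t := 1/4) (by norm_num) using 1; rw [sqrt_quarter]; norm_num
  have h₂ : HasDerivAt u₂ (-17/4) (1/4) := by
    convert hasDerivAt_u₂ (t := 1/4) (by norm_num) using 1; rw [sqrt_quarter]; norm_num
  have hval : u₁ (1/4) = u₂ (1/4) := by
    rw [u₁_eq, u₂_eq (by norm_num), sqrt_quarter]; norm_num
  have hleft := hasDerivWithinAt_Iic_ite_le (h := u₂) h₁
  have hright := hasDerivWithinAt_Ici_ite_le h₂ hval
  refine ⟨h₁.deriv, h₂.deriv, hval, continuousAt_iff_continuous_left_right.2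
    ⟨hleft.continuousWithinAt, hright.continuousWithinAt⟩, fun hconv ↦ ?_⟩
  have := hconv.le_of_hasDerivWithinAt_Iio_Ioi (by rw [interior_Ioo]; norm_num)
    (hleft.mono Iio_subset_Iic_self) (hright.mono Ioi_subset_Ici_self)
  norm_num at this
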